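/- arXiv:1305.2890 — 5 statements merged into one kernel-verified Lean document; each statement's English description precedes it below -/
import Mathlib

section
/- Let S = conv(X₁, …, X_N) be a conditional simplex in (L⁰)^d with barycentric subdivision (C_π)_{π ∈ S_N}, and for s ∈ {1, …, N−1} let B_s = conv(X₁, …, X_s). For a permutation π of {1, …, N}, the intersection C_π ∩ B_s is a conditional simplex of dimension s if and only if {π(1), …, π(s)} = {1, …, s}; in that case C_π ∩ B_s = conv(Y₁^π, …, Y_s^π), and the collection of all such s-dimensional intersections is exactly the barycentric subdivision of B_s. -/
open MeasureTheory Filter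

noncomputable section

variable {Ω : Type*} [MeasurableSpace Ω]

/-- `L⁰(Ω,𝒜,P)`: equivalence classes of real-valued measurable functions modulo
`P`-almost-sure equality. -/
abbrev L0 (P : Measure Ω) : Type _ := Ω →ₘ[P] ℝ

namespace L0

variable (P : Measure Ω)

/-- The indicator `1_A` of a measurable set as an element of `L⁰`. -/
def ind (A : Set Ω) : L0 P :=
  letI := Classical.dec (MeasurableSet A)
  if h : MeasurableSet A then
    AEEqFun.mk (A.indicator fun _ => (1 : ℝ)) (aestronglyMeasurable_const.indicator h)
  else 0

/-- A partition: a countable family of measurable sets, pairwise disjoint up to null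
sets, covering `Ω` up to a null set. -/
structure IsPartition (A : ℕ → Set Ω) : Prop where
  meas : ∀ i, MeasurableSet (A i)
  disj : ∀ i j, i ≠ j → P (A i ∩ A j) = 0
  full : P (⋃ i, A i) = 1

/-- `Z = Σᵢ 1_{Aᵢ} Xᵢ` in `L⁰`: `Z` agrees with `Xᵢ` on `Aᵢ`, i.e. `1_{Aᵢ}·Z = 1_{Aᵢ}·Xᵢ`. -/
def IsGluing1 (A : ℕ → Set Ω) (X : ℕ → L0 P) (Z : L0 P) : Prop :=
  ∀ i, ind P (A i) * Z = ind P (A i) * X i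

/-- `Z = Σᵢ 1_{Aᵢ} Xᵢ` in `(L⁰)^d`. -/
def IsGluing {d : ℕ} (A : ℕ → Set Ω) (X : ℕ → Fin d → L0 P) (Z : Fin d → L0 P) : Prop :=
  ∀ k, IsGluing1 P A (fun i => X i k) (Z k)

/-- The σ-stable hull `σ(𝒞)` of a set `𝒞 ⊆ (L⁰)^d`. -/
def sigmaHull {d : ℕ} (C : Set (Fin d → L0 P)) : Set (Fin d → L0 P) :=
  {Z | ∃ (A : ℕ → Set Ω) (X : ℕ → Fin d → L0 P),
    IsPartition P A ∧ (∀ i, X i ∈ C) ∧ IsGluing P A X Z}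

/-- A function `f` defined (at least) on a σ-stable set `C ⊆ (L⁰)^d` is local if
`f(Σᵢ 1_{Aᵢ} Xᵢ) = Σᵢ 1_{Aᵢ} f(Xᵢ)` for every partition `(Aᵢ)` and family `(Xᵢ)` in `C`. -/
def IsLocal {d e : ℕ} (C : Set (Fin d → L0 P)) (f : (Fin d → L0 P) → (Fin e → L0 P)) : Prop :=
  ∀ (A : ℕ → Set Ω) (X : ℕ → Fin d → L0 P) (Z : Fin d → L0 P),
    IsPartition P A → (∀ i, X i ∈ C) → Z ∈ C → IsGluing P A X Z →
    IsGluing P A (fun i => f (X i)) (f Z)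

/-- Locality for functions with values in `L⁰`. -/
def IsLocalScalar {d : ℕ} (C : Set (Fin d → L0 P)) (f : (Fin d → L0 P) → L0 P) : Prop :=
  ∀ (A : ℕ → Set Ω) (X : ℕ → Fin d → L0 P) (Z : Fin d → L0 P),
    IsPartition P A → (∀ i, X i ∈ C) → Z ∈ C → IsGluing P A X Z →
    IsGluing1 P A (fun i => f (X i)) (f Z)

/-- Locality for functions from `L⁰` to `L⁰`. -/
def IsLocal1 (C : Set (L0 P)) (f : L0 P → L0 P) : Prop :=
  ∀ (A : ℕ → Set Ω) (X : ℕ → L0 P) (Z : L0 P),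
    IsPartition P A → (∀ i, X i ∈ C) → Z ∈ C → IsGluing1 P A X Z →
    IsGluing1 P A (fun i => f (X i)) (f Z)

/-- `P`-almost sure convergence of a sequence in `L⁰`. -/
def TendstoAS (X : ℕ → L0 P) (Y : L0 P) : Prop :=
  ∀ᵐ ω ∂P, Tendsto (fun n => X n ω) atTop (nhds (Y ω))

/-- `P`-almost sure convergence of a sequence in `(L⁰)^d`. -/
def TendstoASd {d : ℕ} (X : ℕ → Fin d → L0 P) (Y : Fin d → L0 P) : Prop :=
  ∀ k, TendstoAS P (fun n => X n k) (Y k)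

/-- Sequential continuity (w.r.t. `P`-a.s. convergence) of `f` on `C ⊆ (L⁰)^d`. -/
def SeqContinuous {d e : ℕ} (C : Set (Fin d → L0 P)) (f : (Fin d → L0 P) → (Fin e → L0 P)) :
    Prop :=
  ∀ (X : ℕ → Fin d → L0 P) (Y : Fin d → L0 P), (∀ n, X n ∈ C) → Y ∈ C →
    TendstoASd P X Y → TendstoASd P (fun n => f (X n)) (f Y)

/-- Sequential continuity for functions from `L⁰` to `L⁰`. -/
def SeqContinuous1 (C : Set (L0 P)) (f : L0 P → L0 P) : Prop :=
  ∀ (X : ℕ → L0 P) (Y : L0 P), (∀ n, X n ∈ C) → Y ∈ C →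
    TendstoAS P X Y → TendstoAS P (fun n => f (X n)) (f Y)

/-- The `L⁰`-convex hull `conv(X₁,…,X_N)` of a finite family in `(L⁰)^d`. -/
def conv {d : ℕ} {ι : Type*} [Fintype ι] (X : ι → Fin d → L0 P) : Set (Fin d → L0 P) :=
  {Y | ∃ lam : ι → L0 P, (∀ i, 0 ≤ lam i) ∧ (∑ i, lam i) = 1 ∧ Y = ∑ i, lam i • X i}

/-- The affine hull `aff(X₁,…,X_N)` of a finite family in `(L⁰)^d`. -/
def aff {d : ℕ} {ι : Type*} [Fintype ι] (X : ι → Fin d → L0 P) : Set (Fin d → L0 P) :=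
  {Y | ∃ lam : ι → L0 P, (∑ i, lam i) = 1 ∧ Y = ∑ i, lam i • X i}

/-- Affine independence of `X₁,…,X_N` in `(L⁰)^d`: either `N = 1`, or `N > 1` and
`Σᵢ₌₁^{N−1} λᵢ (Xᵢ − X_N) = 0` implies `λ₁ = ⋯ = λ_{N−1} = 0`. -/
def AffInd {d : ℕ} : {N : ℕ} → (X : Fin N → Fin d → L0 P) → Prop
  | 0, _ => False
  | 1, _ => True
  | (m + 2), X => ∀ lam : Fin (m + 1) → L0 P,
      (∑ i : Fin (m + 1), lam i • (X i.castSucc - X (Fin.last (m + 1)))) = 0 → ∀ i, lam i = 0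

/-- The `L⁰`-scalar product on `(L⁰)^d`. -/
def inner {d : ℕ} (X Y : Fin d → L0 P) : L0 P := ∑ k, X k * Y k

/-- The `L⁰`-norm on `(L⁰)^d`. -/
def norm {d : ℕ} (X : Fin d → L0 P) : L0 P :=
  AEEqFun.comp Real.sqrt Real.continuous_sqrt (inner P X X)

/-- `D` is the essential supremum (least upper bound in the `P`-a.s. order) of a set
`F ⊆ L⁰`. -/
def IsEssSup (F : Set (L0 P)) (D : L0 P) : Prop :=
  (∀ X ∈ F, X ≤ D) ∧ ∀ D' : L0 P, (∀ X ∈ F, X ≤ D') → D ≤ D'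

/-- `𝒞 ⊆ (L⁰)^d` is bounded if `esssup_{X ∈ 𝒞} ‖X‖` belongs to `L⁰`. -/
def Bounded {d : ℕ} (C : Set (Fin d → L0 P)) : Prop :=
  ∃ b : L0 P, ∀ X ∈ C, norm P X ≤ b

/-- `𝒞 ⊆ (L⁰)^d` is sequentially closed if it contains all `P`-a.s. limits of its
sequences. -/
def SeqClosed {d : ℕ} (C : Set (Fin d → L0 P)) : Prop :=
  ∀ (X : ℕ → Fin d → L0 P) (Y : Fin d → L0 P), (∀ n, X n ∈ C) → TendstoASd P X Y → Y ∈ C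

/-- `L⁰`-convexity of a subset of `(L⁰)^d`. -/
def L0Convex {d : ℕ} (C : Set (Fin d → L0 P)) : Prop :=
  ∀ X ∈ C, ∀ Y ∈ C, ∀ lam : L0 P, 0 ≤ lam → lam ≤ 1 → lam • X + (1 - lam) • Y ∈ C

/-- The vertices `Y_k^π = (1/k) Σᵢ₌₁ᵏ X_{π(i)}` of the member `C_π` of the barycentric
subdivision (0-based: `bary P X π k = (1/(k+1)) Σ_{i ≤ k} X_{π(i)}`). -/
def bary {d N : ℕ} (X : Fin N → Fin d → L0 P) (π : Equiv.Perm (Fin N)) (k : Fin N) :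
    Fin d → L0 P :=
  ((k.1 + 1 : ℝ)⁻¹) • ∑ i ∈ Finset.univ.filter (· ≤ k), X (π i)

end L0

end

/-!
Writing `∑ₖ μₖ Y_k^π = ∑ᵢ cᵢ X_{π(i)}` with `cᵢ = ∑_{k ≥ i} μₖ / (k + 1)` (`baryCoeff`), the map
`μ ↦ c` is triangular, so the `Y^π` are affinely independent, and for nonnegative `μ`, `cᵢ = 0`
forces `μₖ = 0` for all `k ≥ i`. If `π(1), …, π(t) ≤ s` but `π(t + 1) > s`, uniqueness of
barycentric coordinates with respect to the `X`s then gives `C_π ∩ B_s = conv(Y₁^π, …, Y_t^π)`.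
This is an `s`-simplex only when `t = s`: affinely independent points cannot outnumber a family
with the same convex hull, since an `s × t` matrix with a right inverse over the nontrivial ring
`L⁰` has `s ≤ t`. When `π` preserves `{1, …, s}`, its restriction `τ` satisfies `Y_k^π = Y_k^τ`
for `k ≤ s`, which identifies these intersections with the barycentric subdivision of `B_s`.
-/

open Finset

theorem Fin.sum_castLE_eq_sum {M : Type*} [AddCommMonoid M] {m N : ℕ} (h : m ≤ N)
    {f : Fin N → M} (hf : ∀ i : Fin N, m ≤ i → f i = 0) :
    ∑ j : Fin m, f (Fin.castLE h j) = ∑ i, f i :=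
  Fintype.sum_of_injective _ (Fin.castLE_injective h) _ _
    (fun i hi => hf i (not_lt.1 fun hlt => hi ⟨⟨i, hlt⟩, rfl⟩)) fun _ => rfl

section AffineIndependent

variable {R V ι : Type*} [Ring R] [AddCommGroup V] [Module R V] [Fintype ι]

theorem affineIndependent_iff_sum_smul_eq_zero {p : ι → V} :
    AffineIndependent R p ↔ ∀ w : ι → R, ∑ i, w i = 0 → ∑ i, w i • p i = 0 → w = 0 := by
  rw [affineIndependent_iff_of_fintype]
  refine forall_congr' fun w => imp_congr_right fun hw => ?_
  rw [univ.weightedVSub_eq_linear_combination hw, funext_iff]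
  rfl

theorem AffineIndependent.eq_of_sum_smul_eq {p : ι → V} (hp : AffineIndependent R p)
    {w₁ w₂ : ι → R} (hw : ∑ i, w₁ i = ∑ i, w₂ i) (h : ∑ i, w₁ i • p i = ∑ i, w₂ i • p i) :
    w₁ = w₂ :=
  sub_eq_zero.1 <| affineIndependent_iff_sum_smul_eq_zero.1 hp _
    (by simp [sum_sub_distrib, hw]) (by simp [sub_smul, sum_sub_distrib, h])

end AffineIndependent

theorem Matrix.card_le_of_mul_eq_one {R : Type*} [CommRing R] [StrongRankCondition R] {m n : ℕ}
    {A : Matrix (Fin m) (Fin n) R} {B : Matrix (Fin n) (Fin m) R} (h : A * B = 1) : m ≤ n :=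
  le_of_fin_injective R B.mulVecLin fun v w hvw => by
    simpa [Matrix.mulVec_mulVec, h] using congrArg A.mulVec hvw

theorem AffineIndependent.card_le_of_mem_affineSpan {R V : Type*} [CommRing R] [Nontrivial R]
    [AddCommGroup V] [Module R V] {s t : ℕ} {W : Fin s → V} {U : Fin t → V}
    (hW : AffineIndependent R W) (hWU : ∀ j, W j ∈ affineSpan R (Set.range U))
    (hUW : ∀ k, U k ∈ affineSpan R (Set.range W)) : s ≤ t := by
  choose A hA1 hA using fun j => eq_affineCombination_of_mem_affineSpan_of_fintype (hWU j)
  choose B hB1 hB using fun k => eq_affineCombination_of_mem_affineSpan_of_fintype (hUW k)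
  simp only [univ.affineCombination_eq_linear_combination _ _ (hA1 _),
    univ.affineCombination_eq_linear_combination _ _ (hB1 _)] at hA hB
  refine Matrix.card_le_of_mul_eq_one (A := Matrix.of A) (B := Matrix.of B) <|
    Matrix.ext fun j => congrFun <| hW.eq_of_sum_smul_eq ?_ ?_
  · simp only [Matrix.mul_apply, Matrix.of_apply, Matrix.one_apply]
    rw [sum_comm]
    simp [← mul_sum, hB1, hA1]
  · simp only [Matrix.mul_apply, Matrix.of_apply, Matrix.one_apply, ite_smul, one_smul,
      zero_smul, sum_ite_eq, mem_univ, if_true, sum_smul, mul_smul]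
    rw [sum_comm, hA j]
    exact sum_congr rfl fun k _ => by rw [hB k, smul_sum]

section BaryCoeff

variable {M : Type*} [AddCommGroup M] [Module ℝ M] {N : ℕ}

noncomputable def baryCoeff (μ : Fin N → M) (i : Fin N) : M :=
  ∑ k ∈ Ici i, ((k.1 + 1 : ℝ)⁻¹) • μ k

theorem sum_baryCoeff (μ : Fin N → M) : ∑ i, baryCoeff μ i = ∑ k, μ k := by
  simp only [baryCoeff]
  rw [sum_comm' (t' := univ) (s' := Iic) (by simp)]
  refine sum_congr rfl fun k _ => ?_
  rw [sum_const, Fin.card_Iic, ← Nat.cast_smul_eq_nsmul ℝ, smul_smul]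
  simp [mul_inv_cancel₀ (by positivity : (k.1 + 1 : ℝ) ≠ 0)]

theorem eq_zero_of_baryCoeff_eq_zero {μ : Fin N → M} (h : baryCoeff μ = 0) : μ = 0 := by
  classical
  by_contra hμ
  obtain ⟨k, hk, hmax⟩ := (univ.filter (μ · ≠ 0)).exists_max_image id
    (by simpa [filter_nonempty_iff, funext_iff] using hμ)
  rw [mem_filter] at hk
  have hμk : baryCoeff μ k = ((k.1 + 1 : ℝ)⁻¹) • μ k :=
    sum_eq_single_of_mem k (mem_Ici.2 le_rfl) fun j hj hjk => by
      by_contra hj0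
      have hjk' : j ≤ k := hmax j (by simpa [Nat.cast_add_one_ne_zero] using hj0)
      exact hjk (le_antisymm hjk' (mem_Ici.1 hj))
  rw [h, Pi.zero_apply, eq_comm, smul_eq_zero_iff_right (by positivity)] at hμk
  exact hk.2 hμk

variable [PartialOrder M] [IsOrderedAddMonoid M] [PosSMulMono ℝ M] {μ : Fin N → M}

theorem baryCoeff_nonneg (hμ : ∀ k, 0 ≤ μ k) (i : Fin N) : 0 ≤ baryCoeff μ i :=
  sum_nonneg fun k _ => smul_nonneg (by positivity) (hμ k)

theorem baryCoeff_eq_zero_iff (hμ : ∀ k, 0 ≤ μ k) {i : Fin N} :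
    baryCoeff μ i = 0 ↔ ∀ k, i ≤ k → μ k = 0 := by
  rw [baryCoeff, sum_eq_zero_iff_of_nonneg fun k _ => smul_nonneg (by positivity) (hμ k)]
  simp [Nat.cast_add_one_ne_zero]

end BaryCoeff

theorem Finset.image_perm_eq_self_of_forall_mem {α : Type*} [DecidableEq α] (π : Equiv.Perm α)
    {A : Finset α} (h : ∀ a ∈ A, π a ∈ A) : A.image π = A :=
  eq_of_subset_of_card_le (image_subset_iff.2 h) (card_image_of_injective _ π.injective).ge

theorem Finset.perm_mem_iff_of_image_eq_self {α : Type*} [DecidableEq α] {π : Equiv.Perm α}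
    {A : Finset α} (h : A.image π = A) (a : α) : π a ∈ A ↔ a ∈ A := by
  conv_lhs => rw [← h]
  exact π.injective.mem_finset_image

theorem Fin.exists_perm_castLE_iff {N s : ℕ} (h : s ≤ N) (π : Equiv.Perm (Fin N)) :
    (∃ τ : Equiv.Perm (Fin s), ∀ k, π (Fin.castLE h k) = Fin.castLE h (τ k)) ↔
      image π (univ.filter fun i : Fin N => (i : ℕ) < s) =
        univ.filter fun i : Fin N => (i : ℕ) < s := by
  constructor
  · rintro ⟨τ, hτ⟩
    refine image_perm_eq_self_of_forall_mem π fun i hi => ?_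
    rw [mem_filter] at hi ⊢
    refine ⟨mem_univ _, ?_⟩
    rw [show i = Fin.castLE h ⟨i, hi.2⟩ from rfl, hτ]
    exact (τ _).2
  · intro himg
    have hp (i : Fin N) : (π i : ℕ) < s ↔ (i : ℕ) < s := by
      simpa using perm_mem_iff_of_image_eq_self himg i
    exact ⟨(Fin.castLEquiv h).symm.permCongr (π.subtypePerm hp), fun k => Fin.ext <| by simp⟩

theorem Fin.exists_perm_castLE {N s : ℕ} (h : s ≤ N) (τ : Equiv.Perm (Fin s)) :
    ∃ π : Equiv.Perm (Fin N), ∀ k, π (Fin.castLE h k) = Fin.castLE h (τ k) :=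
  ⟨τ.extendDomain (Fin.castLEquiv h), fun k => by
    simpa using τ.extendDomain_apply_image (Fin.castLEquiv h) k⟩

namespace L0

variable {Ω : Type*} [MeasurableSpace Ω] {P : Measure Ω}

instance : CommRing (L0 P) :=
  { (inferInstance : AddCommGroup (L0 P)), (inferInstance : CommMonoid (L0 P)) with
    left_distrib := fun a b c => AEEqFun.toGerm_injective <| by
      simp only [AEEqFun.mul_toGerm, AEEqFun.add_toGerm, mul_add]
    right_distrib := fun a b c => AEEqFun.toGerm_injective <| by
      simp only [AEEqFun.mul_toGerm, AEEqFun.add_toGerm, add_mul]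
    zero_mul := fun a => AEEqFun.toGerm_injective <| by
      simp only [AEEqFun.mul_toGerm, AEEqFun.zero_toGerm, zero_mul]
    mul_zero := fun a => AEEqFun.toGerm_injective <| by
      simp only [AEEqFun.mul_toGerm, AEEqFun.zero_toGerm, mul_zero] }

instance : Algebra ℝ (L0 P) :=
  Algebra.ofModule
    (fun r x y => AEEqFun.induction_on₂ x y fun f _ g _ => by
      simp only [AEEqFun.smul_mk, AEEqFun.mk_mul_mk, smul_mul_assoc])
    (fun r x y => AEEqFun.induction_on₂ x y fun f _ g _ => by
      simp only [AEEqFun.smul_mk, AEEqFun.mk_mul_mk, mul_smul_comm])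

instance : IsOrderedRing (L0 P) :=
  Function.Injective.isOrderedRing AEEqFun.toGerm AEEqFun.zero_toGerm AEEqFun.one_toGerm
    AEEqFun.add_toGerm AEEqFun.mul_toGerm Iff.rfl

instance : PosSMulMono ℝ (L0 P) where
  smul_le_smul_of_nonneg_left r hr x y hxy := by
    rw [← AEEqFun.coeFn_le] at hxy ⊢
    filter_upwards [hxy, AEEqFun.coeFn_smul r x, AEEqFun.coeFn_smul r y] with ω h hx hy
    simpa [hx, hy] using mul_le_mul_of_nonneg_left h hr

instance [NeZero P] : Nontrivial (L0 P) :=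
  domain_nontrivial AEEqFun.toGerm AEEqFun.zero_toGerm AEEqFun.one_toGerm

variable {d N : ℕ}

theorem affInd_iff_affineIndependent (hN : N ≠ 0) (X : Fin N → Fin d → L0 P) :
    AffInd P X ↔ AffineIndependent (L0 P) X := by
  match N, X, hN with
  | 1, X, _ => exact iff_of_true trivial (affineIndependent_of_subsingleton _ _)
  | m + 2, X, _ =>
    rw [affineIndependent_iff_linearIndependent_vsub _ _ (Fin.last _),
      ← linearIndependent_equiv (finSuccAboveEquiv (Fin.last _)), Fintype.linearIndependent_iff]
    simp [AffInd, finSuccAboveEquiv_apply, Fin.succAbove_last]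

theorem mem_conv_self (X : Fin N → Fin d → L0 P) (i : Fin N) : X i ∈ conv P X := by
  classical
  exact ⟨Pi.single i 1, fun j => by by_cases hj : j = i <;> simp [hj], by simp,
    by simp [Pi.single_apply]⟩

theorem conv_subset_affineSpan [NeZero P] (X : Fin N → Fin d → L0 P) :
    conv P X ⊆ affineSpan (L0 P) (Set.range X) := by
  rintro _ ⟨w, -, hw, rfl⟩
  rw [← univ.affineCombination_eq_linear_combination _ _ hw]
  exact affineCombination_mem_affineSpan hw X

theorem card_le_of_conv_eq [NeZero P] {s t : ℕ}
    {W : Fin s → Fin d → L0 P} {U : Fin t → Fin d → L0 P} (hW : AffineIndependent (L0 P) W)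
    (h : conv P W = conv P U) : s ≤ t :=
  hW.card_le_of_mem_affineSpan (fun j => conv_subset_affineSpan U (h ▸ mem_conv_self W j))
    (fun k => conv_subset_affineSpan W (h ▸ mem_conv_self U k))

theorem mem_conv_castLE_iff {m : ℕ} (h : m ≤ N) (F : Fin N → Fin d → L0 P)
    {Z : Fin d → L0 P} :
    Z ∈ conv P (fun j : Fin m => F (Fin.castLE h j)) ↔ ∃ μ : Fin N → L0 P, (∀ i, 0 ≤ μ i) ∧
      ∑ i, μ i = 1 ∧ (∀ i : Fin N, m ≤ i → μ i = 0) ∧ Z = ∑ i, μ i • F i := by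
  constructor
  · rintro ⟨w, hw0, hw1, rfl⟩
    set μ : Fin N → L0 P := fun i => if hi : (i : ℕ) < m then w ⟨i, hi⟩ else 0
    have hμ (j : Fin m) : μ (Fin.castLE h j) = w j := dif_pos j.2
    have hμm (i : Fin N) (hi : m ≤ i) : μ i = 0 := dif_neg (not_lt.2 hi)
    refine ⟨μ, fun i => ?_, ?_, hμm, ?_⟩
    · by_cases hi : (i : ℕ) < m
      · simpa [μ, hi] using hw0 ⟨i, hi⟩
      · simp [μ, hi]
    · simpa only [hμ, hw1] using (Fin.sum_castLE_eq_sum h hμm).symm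
    · simpa only [hμ] using
        Fin.sum_castLE_eq_sum h (f := fun i => μ i • F i) fun i hi => by simp [hμm i hi]
  · rintro ⟨μ, hμ0, hμ1, hμm, rfl⟩
    refine ⟨fun j => μ (Fin.castLE h j), fun j => hμ0 _, ?_, ?_⟩
    · exact (Fin.sum_castLE_eq_sum h hμm).trans hμ1
    · exact (Fin.sum_castLE_eq_sum h (f := fun i => μ i • F i) fun i hi => by simp [hμm i hi]).symm

theorem sum_smul_bary (X : Fin N → Fin d → L0 P) (π : Equiv.Perm (Fin N)) (μ : Fin N → L0 P) :
    ∑ k, μ k • bary P X π k = ∑ j, baryCoeff μ (π.symm j) • X j :=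
  calc ∑ k, μ k • bary P X π k = ∑ k, ∑ i ∈ Iic k, (((k.1 + 1 : ℝ)⁻¹) • μ k) • X (π i) := by
        simp only [bary, filter_ge_eq_Iic, smul_sum, smul_comm (μ _), smul_assoc]
    _ = ∑ i, baryCoeff μ i • X (π i) := by
        rw [sum_comm' (t' := univ) (s' := Ici) (by simp)]
        simp only [baryCoeff, sum_smul]
    _ = ∑ j, baryCoeff μ (π.symm j) • X j := by
        simpa using Equiv.sum_comp π fun j => baryCoeff μ (π.symm j) • X j

theorem sum_baryCoeff_symm (π : Equiv.Perm (Fin N)) (μ : Fin N → L0 P) :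
    ∑ j, baryCoeff μ (π.symm j) = ∑ k, μ k :=
  (Equiv.sum_comp π.symm _).trans (sum_baryCoeff μ)

theorem affineIndependent_bary {X : Fin N → Fin d → L0 P} (hX : AffineIndependent (L0 P) X)
    (π : Equiv.Perm (Fin N)) : AffineIndependent (L0 P) (bary P X π) := by
  refine affineIndependent_iff_sum_smul_eq_zero.2 fun μ hμ0 hμ => eq_zero_of_baryCoeff_eq_zero ?_
  have h := affineIndependent_iff_sum_smul_eq_zero.1 hX (fun j => baryCoeff μ (π.symm j))
    (by rw [sum_baryCoeff_symm, hμ0]) (by rw [← sum_smul_bary, hμ])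
  funext i
  simpa using congrFun h (π i)

theorem bary_castLE {s : ℕ} (h : s ≤ N) (X : Fin N → Fin d → L0 P) {π : Equiv.Perm (Fin N)}
    {τ : Equiv.Perm (Fin s)} (hτ : ∀ k, π (Fin.castLE h k) = Fin.castLE h (τ k)) (k : Fin s) :
    bary P X π (Fin.castLE h k) = bary P (fun i => X (Fin.castLE h i)) τ k := by
  simp only [bary, filter_ge_eq_Iic, Fin.sum_Iic_castLE, hτ, Fin.val_castLE]

theorem conv_bary_inter_conv_castLE {X : Fin N → Fin d → L0 P}
    (hX : AffineIndependent (L0 P) X) (π : Equiv.Perm (Fin N)) {s t : ℕ} (hs : s ≤ N)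
    (ht : t ≤ N) (hlt : ∀ i : Fin N, (i : ℕ) < t → (π i : ℕ) < s)
    (hge : ∀ i : Fin N, (i : ℕ) = t → s ≤ π i) :
    conv P (bary P X π) ∩ conv P (fun i : Fin s => X (Fin.castLE hs i)) =
      conv P (fun k : Fin t => bary P X π (Fin.castLE ht k)) := by
  ext Z
  simp only [Set.mem_inter_iff, mem_conv_castLE_iff]
  constructor
  · rintro ⟨⟨μ, hμ0, hμ1, rfl⟩, ν, -, hν1, hνs, hν⟩
    rw [sum_smul_bary] at hν
    have hμν := hX.eq_of_sum_smul_eq (by rw [sum_baryCoeff_symm, hμ1, hν1]) hν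
    refine ⟨μ, hμ0, hμ1, fun k hk => ?_, rfl⟩
    let i₀ : Fin N := ⟨t, hk.trans_lt k.2⟩
    have hi₀ : baryCoeff μ i₀ = 0 := by
      simpa [hνs _ (hge i₀ rfl)] using congrFun hμν (π i₀)
    exact (baryCoeff_eq_zero_iff hμ0).1 hi₀ k hk
  · rintro ⟨μ, hμ0, hμ1, hμt, rfl⟩
    refine ⟨⟨μ, hμ0, hμ1, rfl⟩, fun j => baryCoeff μ (π.symm j),
      fun j => baryCoeff_nonneg hμ0 _, by rw [sum_baryCoeff_symm, hμ1],
      fun j hj => (baryCoeff_eq_zero_iff hμ0).2 fun k hk => hμt k ?_, sum_smul_bary X π μ⟩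
    by_contra hkt
    have := hlt (π.symm j) (lt_of_le_of_lt hk (not_le.1 hkt))
    simp only [Equiv.apply_symm_apply] at this
    omega

theorem conv_bary_inter_eq_of_image_eq {X : Fin N → Fin d → L0 P}
    (hX : AffineIndependent (L0 P) X) {π : Equiv.Perm (Fin N)} {s : ℕ} (hs : s ≤ N)
    (hπ : image π (univ.filter fun i : Fin N => (i : ℕ) < s) =
      univ.filter fun i : Fin N => (i : ℕ) < s) :
    conv P (bary P X π) ∩ conv P (fun i : Fin s => X (Fin.castLE hs i)) =
      conv P (fun k : Fin s => bary P X π (Fin.castLE hs k)) := by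
  have hπs (i : Fin N) : (π i : ℕ) < s ↔ (i : ℕ) < s := by
    simpa using perm_mem_iff_of_image_eq_self hπ i
  exact conv_bary_inter_conv_castLE hX π hs hs (fun i => (hπs i).2)
    fun i hi => not_lt.1 fun h => ((hπs i).1 h).ne hi

theorem image_filter_eq_of_conv_bary_inter_eq [NeZero P]
    {X : Fin N → Fin d → L0 P} (hX : AffineIndependent (L0 P) X) (π : Equiv.Perm (Fin N))
    {s : ℕ} (hs : s ≤ N) {W : Fin s → Fin d → L0 P} (hW : AffineIndependent (L0 P) W)
    (h : conv P (bary P X π) ∩ conv P (fun i : Fin s => X (Fin.castLE hs i)) = conv P W) :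
    image π (univ.filter fun i : Fin N => (i : ℕ) < s) =
      univ.filter fun i : Fin N => (i : ℕ) < s := by
  refine image_perm_eq_self_of_forall_mem π fun i hi => ?_
  by_contra hπi
  simp only [mem_filter, mem_univ, true_and, not_lt] at hi hπi
  obtain ⟨i₀, hi₀, hmin⟩ :=
    (univ.filter fun j : Fin N => s ≤ π j).exists_min_image (fun j => (j : ℕ)) ⟨i, by simpa⟩
  simp only [mem_filter, mem_univ, true_and] at hi₀ hmin
  have hface := conv_bary_inter_conv_castLE hX π hs i₀.2.le
    (fun j hj => not_le.1 fun hj' => (hmin j hj').not_gt hj) fun j hj => (Fin.ext hj) ▸ hi₀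
  have := card_le_of_conv_eq hW (h.symm.trans hface)
  have := hmin i hπi
  omega

end L0

open MeasureTheory in
/-- the `s`-dimensional intersections `C_π ∩ B_s` are exactly those with
`{π(1),…,π(s)} = {1,…,s}`, they equal `conv(Y₁^π,…,Y_s^π)`, and together they form the
barycentric subdivision of `B_s`. -/
theorem stmt_10 {Ω : Type*} [MeasurableSpace Ω] (P : Measure Ω) [IsProbabilityMeasure P]
    {d N s : ℕ} (hs1 : 1 ≤ s) (hsN : s ≤ N - 1)
    (X : Fin N → Fin d → L0 P) (hX : L0.AffInd P X)
    (Bs : Set (Fin d → L0 P))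
    (hBs : Bs = L0.conv P (fun i : Fin s => X (Fin.castLE (by omega) i))) :
    (∀ π : Equiv.Perm (Fin N),
      (∃ W : Fin s → Fin d → L0 P, L0.AffInd P W ∧
          L0.conv P (L0.bary P X π) ∩ Bs = L0.conv P W)
        ↔ Finset.image π (Finset.univ.filter fun i : Fin N => (i : ℕ) < s)
            = Finset.univ.filter fun i : Fin N => (i : ℕ) < s)
    ∧ (∀ π : Equiv.Perm (Fin N),
        Finset.image π (Finset.univ.filter fun i : Fin N => (i : ℕ) < s)
            = (Finset.univ.filter fun i : Fin N => (i : ℕ) < s) →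
        L0.conv P (L0.bary P X π) ∩ Bs
          = L0.conv P (fun k : Fin s => L0.bary P X π (Fin.castLE (by omega) k)))
    ∧ ({T | ∃ π : Equiv.Perm (Fin N),
          Finset.image π (Finset.univ.filter fun i : Fin N => (i : ℕ) < s)
              = (Finset.univ.filter fun i : Fin N => (i : ℕ) < s)
            ∧ T = L0.conv P (L0.bary P X π) ∩ Bs}
        = {T | ∃ τ : Equiv.Perm (Fin s),
            T = L0.conv P (L0.bary P (fun i : Fin s => X (Fin.castLE (by omega) i)) τ)}) := by
  have hs : s ≤ N := by omega
  have hX' := (L0.affInd_iff_affineIndependent (by omega) X).1 hX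
  subst hBs
  have hface (π : Equiv.Perm (Fin N)) := L0.conv_bary_inter_eq_of_image_eq hX' (π := π) hs
  have haffInd {W : Fin s → Fin d → L0 P} :=
    L0.affInd_iff_affineIndependent (P := P) (by omega : s ≠ 0) W
  refine ⟨fun π => ⟨fun ⟨W, hW, h⟩ => ?_, fun hπ => ?_⟩, hface, Set.ext fun T => ⟨?_, ?_⟩⟩
  · exact L0.image_filter_eq_of_conv_bary_inter_eq hX' π hs (haffInd.1 hW) h
  · exact ⟨_, haffInd.2 ((L0.affineIndependent_bary hX' π).comp_embedding (Fin.castLEEmb hs)),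
      hface π hπ⟩
  · rintro ⟨π, hπ, rfl⟩
    obtain ⟨τ, hτ⟩ := (Fin.exists_perm_castLE_iff hs π).2 hπ
    exact ⟨τ, by rw [hface π hπ, funext (L0.bary_castLE hs X hτ)]⟩
  · rintro ⟨τ, rfl⟩
    obtain ⟨π, hτ⟩ := Fin.exists_perm_castLE hs τ
    have hπ := (Fin.exists_perm_castLE_iff hs π).1 ⟨τ, hτ⟩
    exact ⟨π, hπ, by rw [hface π hπ, funext (L0.bary_castLE hs X hτ)]⟩
end

section
/- Let S = conv(X₁, …, X_N) be a conditional simplex in (L⁰)^d with barycentric subdivision (C_π)_{π ∈ S_N}. Then for every permutation π of {1, …, N}: diam(C_π) ≤ esssup_{i,j = 1,…,N} ‖Yᵢ^π − Yⱼ^π‖ ≤ ((N−1)/N) · diam(S) P-almost surely. -/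
open MeasureTheory Filter

/-!
Outside a null set, elements of `(L⁰)^d` are vectors of `ℝ^d`, `L⁰`-convex combinations are
ordinary convex combinations and the `L⁰`-norm is the Euclidean norm, so both inequalities are
proved pointwise. The first is the fact that two points of a convex hull are no farther apart
than some two of its generators. For the second, if `i ≤ j` and `s ⊆ t` are the index sets
averaged by `Yᵢ` and `Yⱼ`, then `Yⱼ - Yᵢ = |t|⁻¹ Σ_{a ∈ t \ s} (X_a - Yᵢ)`, and every
`‖X_a - Yᵢ‖` is bounded by the largest distance between vertices; this gives the factor
`(|t| - |s|) / |t| ≤ (N - 1) / N`.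
-/

open Finset

section ConvexGeometry

variable {E : Type*} [SeminormedAddCommGroup E] [NormedSpace ℝ E]

theorem norm_sub_le_of_mem_convexHull {s : Set E} {x y : E} {D : ℝ}
    (hx : x ∈ convexHull ℝ s) (hy : y ∈ convexHull ℝ s)
    (hD : ∀ a ∈ s, ∀ b ∈ s, ‖a - b‖ ≤ D) : ‖x - y‖ ≤ D := by
  obtain ⟨a, ha, b, hb, hab⟩ := convexHull_exists_dist_ge2 hx hy
  simpa only [dist_eq_norm] using hab.trans (dist_eq_norm a b ▸ hD a ha b hb)

theorem norm_centroid_sub_centroid_le {ι : Type*} {s t : Finset ι} (hst : s ⊆ t)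
    (hs : s.Nonempty) (x : ι → E) {D : ℝ} (hD : ∀ a ∈ t, ∀ b ∈ t, ‖x a - x b‖ ≤ D) :
    ‖(#t : ℝ)⁻¹ • ∑ a ∈ t, x a - (#s : ℝ)⁻¹ • ∑ a ∈ s, x a‖ ≤ (1 - #s / #t) * D := by
  classical
  set c := (#s : ℝ)⁻¹ • ∑ a ∈ s, x a
  have hs0 : (#s : ℝ) ≠ 0 := Nat.cast_ne_zero.2 hs.card_pos.ne'
  have ht0 : (#t : ℝ) ≠ 0 := Nat.cast_ne_zero.2 (hs.mono hst).card_pos.ne'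
  have hc : c ∈ convexHull ℝ (x '' t) := by
    have := s.centerMass_mem_convexHull (w := fun _ => (1 : ℝ)) (fun _ _ => zero_le_one)
      (by simpa using hs.card_pos) fun a ha => Set.mem_image_of_mem x (hst ha)
    simpa [Finset.centerMass, c] using this
  have hxc : ∀ a ∈ t, ‖x a - c‖ ≤ D := fun a ha =>
    norm_sub_le_of_mem_convexHull (subset_convexHull ℝ _ (Set.mem_image_of_mem x ha)) hc
      (by rintro _ ⟨a, ha, rfl⟩ _ ⟨b, hb, rfl⟩; exact hD a ha b hb)
  have hsum_s : ∑ a ∈ s, (x a - c) = 0 := by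
    rw [sum_sub_distrib, sum_const, ← Nat.cast_smul_eq_nsmul ℝ, smul_inv_smul₀ hs0, sub_self]
  have hdiff : (#t : ℝ)⁻¹ • ∑ a ∈ t, x a - c = (#t : ℝ)⁻¹ • ∑ a ∈ t \ s, (x a - c) := by
    rw [sum_sdiff_eq_sub hst, hsum_s, sub_zero, sum_sub_distrib, sum_const,
      ← Nat.cast_smul_eq_nsmul ℝ, smul_sub, inv_smul_smul₀ ht0]
  calc ‖(#t : ℝ)⁻¹ • ∑ a ∈ t, x a - c‖
      = (#t : ℝ)⁻¹ * ‖∑ a ∈ t \ s, (x a - c)‖ := by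
        rw [hdiff, norm_smul, norm_inv, Real.norm_natCast]
    _ ≤ (#t : ℝ)⁻¹ * (#(t \ s) * D) := by
        gcongr
        simpa using norm_sum_le_of_le (t \ s) fun a ha => hxc a (sdiff_subset ha)
    _ = (1 - #s / #t) * D := by
        rw [card_sdiff_of_subset hst, Nat.cast_sub (card_le_card hst)]
        field_simp

theorem norm_prefixMean_sub_prefixMean_le {N : ℕ} (x : Fin N → E) {D : ℝ}
    (hD : ∀ a b, ‖x a - x b‖ ≤ D) (i j : Fin N) :
    ‖(i.1 + 1 : ℝ)⁻¹ • ∑ l ∈ univ.filter (· ≤ i), x l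
        - (j.1 + 1 : ℝ)⁻¹ • ∑ l ∈ univ.filter (· ≤ j), x l‖ ≤ ((N - 1 : ℝ) / N) * D := by
  wlog hji : j ≤ i generalizing i j
  · rw [norm_sub_rev]
    exact this j i (le_of_not_ge hji)
  have hcard : ∀ k : Fin N, (#(univ.filter (· ≤ k)) : ℝ) = k.1 + 1 := fun k => by
    rw [filter_ge_eq_Iic, Fin.card_Iic, Nat.cast_succ]
  have hmean := norm_centroid_sub_centroid_le (s := univ.filter (· ≤ j))
    (t := univ.filter (· ≤ i)) (fun l hl => by
      simp only [mem_filter, mem_univ, true_and] at hl ⊢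
      exact hl.trans hji)
    ⟨j, by simp⟩ x fun a _ b _ => hD a b
  rw [hcard, hcard] at hmean
  refine hmean.trans (mul_le_mul_of_nonneg_right ?_ ((norm_nonneg _).trans (hD i i)))
  have hiN : (i.1 + 1 : ℝ) ≤ N := by exact_mod_cast i.2
  rw [one_sub_div (by positivity), div_le_div_iff₀ (by positivity) (by linarith)]
  nlinarith

end ConvexGeometry

namespace L0

variable {Ω : Type*} [MeasurableSpace Ω] {P : Measure Ω} {d : ℕ}

-- Depends on the chosen representatives, so only almost-everywhere statements about it make sense.
noncomputable def toEuclidean (Z : Fin d → L0 P) (ω : Ω) : EuclideanSpace ℝ (Fin d) :=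
  WithLp.toLp 2 fun k => Z k ω

theorem toEuclidean_ae_eq {Z : Fin d → L0 P} {v : Ω → EuclideanSpace ℝ (Fin d)}
    (h : ∀ k, ∀ᵐ ω ∂P, Z k ω = v ω k) : toEuclidean Z =ᵐ[P] v := by
  filter_upwards [ae_all_iff.2 h] with ω hω
  ext k
  exact hω k

theorem toEuclidean_sub (Z W : Fin d → L0 P) :
    toEuclidean (Z - W) =ᵐ[P] toEuclidean Z - toEuclidean W :=
  toEuclidean_ae_eq fun k => by
    filter_upwards [AEEqFun.coeFn_sub (Z k) (W k)] with ω h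
    simp [h, toEuclidean]

theorem toEuclidean_smul (r : ℝ) (Z : Fin d → L0 P) :
    toEuclidean (r • Z) =ᵐ[P] r • toEuclidean Z :=
  toEuclidean_ae_eq fun k => by
    filter_upwards [AEEqFun.coeFn_smul r (Z k)] with ω h
    simp [h, toEuclidean]

theorem toEuclidean_mul_smul (lam : L0 P) (Z : Fin d → L0 P) :
    toEuclidean (lam • Z) =ᵐ[P] fun ω => lam ω • toEuclidean Z ω :=
  toEuclidean_ae_eq fun k => by
    filter_upwards [AEEqFun.coeFn_mul lam (Z k)] with ω h
    simp [h, toEuclidean]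

theorem toEuclidean_sum {ι : Type*} (s : Finset ι) (Z : ι → Fin d → L0 P) :
    toEuclidean (∑ i ∈ s, Z i) =ᵐ[P] ∑ i ∈ s, toEuclidean (Z i) :=
  toEuclidean_ae_eq fun k => by
    filter_upwards [AEEqFun.coeFn_fun_finsetSum s fun i => Z i k] with ω h
    simp [← h, toEuclidean, Finset.sum_apply]

theorem norm_sub_ae_eq (Z W : Fin d → L0 P) :
    L0.norm P (Z - W) =ᵐ[P] fun ω => ‖toEuclidean Z ω - toEuclidean W ω‖ := by
  filter_upwards [AEEqFun.coeFn_comp Real.sqrt Real.continuous_sqrt (L0.inner P (Z - W) (Z - W)),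
    AEEqFun.coeFn_fun_finsetSum univ fun k => (Z - W) k * (Z - W) k,
    ae_all_iff.2 fun k => AEEqFun.coeFn_mul ((Z - W) k) ((Z - W) k),
    toEuclidean_sub Z W] with ω hsqrt hsum hmul hsub
  rw [L0.norm, hsqrt, Function.comp_apply, L0.inner, hsum, ← Pi.sub_apply, ← hsub,
    EuclideanSpace.norm_eq]
  simp only [hmul, Pi.mul_apply]
  simp [toEuclidean, sq]

theorem ae_forall_norm_sub_le {ι : Type*} [Countable ι] {Y : ι → Fin d → L0 P} {D : L0 P}
    (h : ∀ i j, L0.norm P (Y i - Y j) ≤ D) :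
    ∀ᵐ ω ∂P, ∀ i j, ‖toEuclidean (Y i) ω - toEuclidean (Y j) ω‖ ≤ D ω := by
  simp only [ae_all_iff]
  intro i j
  filter_upwards [AEEqFun.coeFn_le.2 (h i j), norm_sub_ae_eq (Y i) (Y j)] with ω hle heq
  exact heq ▸ hle

theorem ae_mem_convexHull_of_mem_conv {ι : Type*} [Fintype ι] {Y : ι → Fin d → L0 P}
    {Z : Fin d → L0 P} (hZ : Z ∈ conv P Y) :
    ∀ᵐ ω ∂P, toEuclidean Z ω ∈ convexHull ℝ (Set.range fun i => toEuclidean (Y i) ω) := by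
  obtain ⟨lam, hlam0, hlam1, rfl⟩ := hZ
  have hnonneg : ∀ᵐ ω ∂P, ∀ i, 0 ≤ lam i ω := ae_all_iff.2 fun i => by
    filter_upwards [AEEqFun.coeFn_le.2 (hlam0 i), AEEqFun.coeFn_zero (μ := P) (β := ℝ)]
      with ω hle hzero
    simpa [hzero] using hle
  have hsum : ∀ᵐ ω ∂P, ∑ i, lam i ω = 1 := by
    filter_upwards [AEEqFun.coeFn_fun_finsetSum univ lam, AEEqFun.coeFn_one (μ := P) (β := ℝ)]
      with ω hsum hone
    rw [← hsum, hlam1, hone, Pi.one_apply]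
  filter_upwards [hnonneg, hsum, toEuclidean_sum univ fun i => lam i • Y i,
    ae_all_iff.2 fun i => toEuclidean_mul_smul (lam i) (Y i)] with ω hnonneg hsum hZ hsmul
  refine mem_convexHull_of_exists_fintype (fun i => lam i ω) _ hnonneg hsum
    (fun i => Set.mem_range_self i) ?_
  rw [hZ, Finset.sum_apply]
  exact Finset.sum_congr rfl fun i _ => (hsmul i).symm

theorem const_mul_eq_smul (r : ℝ) (f : L0 P) : AEEqFun.const Ω r * f = r • f := by
  refine AEEqFun.ext ?_
  filter_upwards [AEEqFun.coeFn_mul (AEEqFun.const Ω r) f, AEEqFun.coeFn_const (μ := P) Ω r,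
    AEEqFun.coeFn_smul r f] with ω hmul hconst hsmul
  simp [hmul, hconst, hsmul]

theorem sum_smul_mem_conv {ι : Type*} [Fintype ι] (Y : ι → Fin d → L0 P) {w : ι → ℝ}
    (hw0 : ∀ i, 0 ≤ w i) (hw1 : ∑ i, w i = 1) : ∑ i, w i • Y i ∈ conv P Y := by
  refine ⟨fun i => AEEqFun.const Ω (w i), fun i => AEEqFun.coeFn_le.1 ?_, ?_, ?_⟩
  · filter_upwards [AEEqFun.coeFn_const (μ := P) Ω (w i), AEEqFun.coeFn_zero (μ := P) (β := ℝ)]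
      with ω hconst hzero
    simpa [hconst, hzero] using hw0 i
  · refine AEEqFun.ext ?_
    filter_upwards [AEEqFun.coeFn_fun_finsetSum univ fun i => AEEqFun.const Ω (w i),
      ae_all_iff.2 fun i => AEEqFun.coeFn_const (μ := P) Ω (w i),
      AEEqFun.coeFn_one (μ := P) (β := ℝ)] with ω hsum hconst hone
    simp [hsum, hconst, hone, hw1]
  · ext1 k
    simp [Finset.sum_apply, const_mul_eq_smul]

theorem mem_conv_self_s11 {ι : Type*} [Fintype ι] [DecidableEq ι] (Y : ι → Fin d → L0 P) (a : ι) :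
    Y a ∈ conv P Y := by
  simpa using sum_smul_mem_conv (P := P) Y (w := Pi.single a 1)
    (fun i => by by_cases h : i = a <;> simp [h]) (by simp)

theorem toEuclidean_bary {N : ℕ} (X : Fin N → Fin d → L0 P) (π : Equiv.Perm (Fin N)) :
    ∀ᵐ ω ∂P, ∀ k, toEuclidean (bary P X π k) ω
      = (k.1 + 1 : ℝ)⁻¹ • ∑ i ∈ univ.filter (· ≤ k), toEuclidean (X (π i)) ω := by
  refine ae_all_iff.2 fun k => ?_
  filter_upwards [toEuclidean_smul (k.1 + 1 : ℝ)⁻¹ (∑ i ∈ univ.filter (· ≤ k), X (π i)),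
    toEuclidean_sum (univ.filter (· ≤ k)) fun i => X (π i)] with ω hsmul hsum
  rw [bary, hsmul, Pi.smul_apply, hsum, Finset.sum_apply]

end L0

open MeasureTheory in
theorem stmt_11_general {Ω : Type*} [MeasurableSpace Ω] (P : Measure Ω)
    {d N : ℕ} (X : Fin N → Fin d → L0 P)
    (π : Equiv.Perm (Fin N)) (DS DC M : L0 P)
    (hDS : L0.IsEssSup P
      {e | ∃ Z ∈ L0.conv P X, ∃ W ∈ L0.conv P X, e = L0.norm P (Z - W)} DS)
    (hDC : L0.IsEssSup P
      {e | ∃ Z ∈ L0.conv P (L0.bary P X π), ∃ W ∈ L0.conv P (L0.bary P X π),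
        e = L0.norm P (Z - W)} DC)
    (hM : L0.IsEssSup P
      {e | ∃ i j : Fin N, e = L0.norm P (L0.bary P X π i - L0.bary P X π j)} M) :
    DC ≤ M ∧ M ≤ ((N - 1 : ℝ) / N) • DS := by
  constructor
  · refine hDC.2 M ?_
    rintro _ ⟨Z, hZ, W, hW, rfl⟩
    refine AEEqFun.coeFn_le.1 ?_
    filter_upwards [L0.norm_sub_ae_eq Z W, L0.ae_mem_convexHull_of_mem_conv hZ,
      L0.ae_mem_convexHull_of_mem_conv hW, L0.ae_forall_norm_sub_le fun i j => hM.1 _ ⟨i, j, rfl⟩]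
      with ω hnorm hZω hWω hM
    rw [hnorm]
    exact norm_sub_le_of_mem_convexHull hZω hWω (by rintro _ ⟨i, rfl⟩ _ ⟨j, rfl⟩; exact hM i j)
  · refine hM.2 _ ?_
    rintro _ ⟨i, j, rfl⟩
    have hvertex : ∀ a b, L0.norm P (X (π a) - X (π b)) ≤ DS := fun a b =>
      hDS.1 _ ⟨_, L0.mem_conv_self_s11 X (π a), _, L0.mem_conv_self_s11 X (π b), rfl⟩
    refine AEEqFun.coeFn_le.1 ?_
    filter_upwards [L0.norm_sub_ae_eq (L0.bary P X π i) (L0.bary P X π j),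
      L0.ae_forall_norm_sub_le hvertex, L0.toEuclidean_bary X π,
      AEEqFun.coeFn_smul ((N - 1 : ℝ) / N) DS] with ω hnorm hDSω hbary hsmul
    rw [hnorm, hbary, hbary, hsmul]
    exact norm_prefixMean_sub_prefixMean_le _ hDSω i j

open MeasureTheory in
/-- diameter estimate for the barycentric subdivision:
`diam(C_π) ≤ esssup_{i,j} ‖Yᵢ^π − Yⱼ^π‖ ≤ ((N−1)/N)·diam(S)`. -/
theorem stmt_11 {Ω : Type*} [MeasurableSpace Ω] (P : Measure Ω) [IsProbabilityMeasure P]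
    {d N : ℕ} (X : Fin N → Fin d → L0 P) (hX : L0.AffInd P X)
    (π : Equiv.Perm (Fin N)) (DS DC M : L0 P)
    (hDS : L0.IsEssSup P
      {e | ∃ Z ∈ L0.conv P X, ∃ W ∈ L0.conv P X, e = L0.norm P (Z - W)} DS)
    (hDC : L0.IsEssSup P
      {e | ∃ Z ∈ L0.conv P (L0.bary P X π), ∃ W ∈ L0.conv P (L0.bary P X π),
        e = L0.norm P (Z - W)} DC)
    (hM : L0.IsEssSup P
      {e | ∃ i j : Fin N, e = L0.norm P (L0.bary P X π i - L0.bary P X π j)} M) :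
    DC ≤ M ∧ M ≤ ((N - 1 : ℝ) / N) • DS :=
  stmt_11_general P X π DS DC M hDS hDC hM
end

section
/- Let S = conv(X₁, …, X_N) be a conditional simplex in (L⁰)^d, D ⊆ S a σ-stable subset, and f : S → S a local function. For X ∈ D write X = Σᵢ₌₁ᴺ λᵢ Xᵢ and f(X) = Σᵢ₌₁ᴺ μᵢ Xᵢ (the coefficients λᵢ, μᵢ ∈ L⁰₊ with Σλᵢ = Σμᵢ = 1 being unique). Then: (1) every local function φ : D → {0, …, N}(𝒜) satisfying, for every X ∈ D, (i) P({φ(X) = i} ⊆ {λᵢ > 0} ∩ {λᵢ ≥ μᵢ}) = 1 for i = 1, …, N and (ii) P(⋃ᵢ₌₁ᴺ ({λᵢ > 0} ∩ {λᵢ ≥ μᵢ}) ⊆ ⋃ᵢ₌₁ᴺ {φ(X) = i}) = 1, in fact takes values in {1, …, N}(𝒜) and satisfies P({φ(X) = i} ⊆ {λᵢ > 0}) = 1 for all i (i.e., φ is a proper labeling function); (2) such a local function φ exists. -/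
open MeasureTheory Filter

/-!
Since `∑ λᵢ = ∑ μᵢ = 1` with `μ ≥ 0`, some `i` has `λᵢ > 0` and `μᵢ ≤ λᵢ`; so condition (ii)
forces `φ` to take a value in `{1, …, N}` almost surely, and (i) gives `λᵢ > 0` on `{φ = i}`.
For existence, let `φ(Z)` be, pointwise in `ω`, the largest such index (or `0`), computed from
the barycentric coordinates of `Z` and `f Z`. Affine independence makes these coordinates
unique, even on each event `A` separately (multiply a relation by `1_A`), so on `Aⱼ` the
coordinates of `Σ 1_{Aᵢ} Yᵢ` and of its image under the local `f` agree with those of `Yⱼ`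
and `f Yⱼ`; hence `φ` is local.
-/

namespace MeasureTheory.AEEqFun

variable {α R : Type*} [MeasurableSpace α] {μ : Measure α} [TopologicalSpace R]

instance instNatCast [NatCast R] : NatCast (α →ₘ[μ] R) := ⟨fun n => const α (n : R)⟩

instance instIntCast [IntCast R] : IntCast (α →ₘ[μ] R) := ⟨fun n => const α (n : R)⟩

instance instCommRing [CommRing R] [IsTopologicalRing R] : CommRing (α →ₘ[μ] R) :=
  toGerm_injective.commRing toGerm zero_toGerm one_toGerm add_toGerm mul_toGerm neg_toGerm
    sub_toGerm (fun _ _ => smul_toGerm _ _) (fun _ _ => smul_toGerm _ _) pow_toGerm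
    (fun _ => rfl) (fun _ => rfl)

end MeasureTheory.AEEqFun

section AdmissibleLabel

variable {N : ℕ}

theorem exists_pos_and_le_of_sum_le {ι : Type*} [Fintype ι] {l m : ι → ℝ} (hm : ∀ i, 0 ≤ m i)
    (hle : ∑ i, m i ≤ ∑ i, l i) (hpos : 0 < ∑ i, l i) : ∃ i, 0 < l i ∧ m i ≤ l i := by
  by_contra! h
  obtain ⟨i, -, hi⟩ := Finset.exists_lt_of_sum_lt (s := Finset.univ) (f := fun _ => 0) (g := l)
    (by simpa using hpos)
  have hlt : ∑ i, l i < ∑ i, m i :=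
    Finset.sum_lt_sum (fun j _ => (le_or_gt (l j) 0).elim (fun hj => hj.trans (hm j))
      fun hj => (h j hj).le) ⟨i, Finset.mem_univ _, h i hi⟩
  exact hlt.not_ge hle

noncomputable def admissibleLabel (l m : Fin N → ℝ) : ℕ :=
  Finset.univ.sup fun i => if 0 < l i ∧ m i ≤ l i then (i : ℕ) + 1 else 0

theorem admissibleLabel_le (l m : Fin N → ℝ) : admissibleLabel l m ≤ N :=
  Finset.sup_le fun i _ => by split_ifs <;> omega

theorem succ_le_admissibleLabel {l m : Fin N → ℝ} {i : Fin N} (hi : 0 < l i ∧ m i ≤ l i) :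
    (i : ℕ) + 1 ≤ admissibleLabel l m :=
  Finset.le_sup_of_le (Finset.mem_univ i) (by simp [hi])

theorem admissibleLabel_eq_zero_or_exists (l m : Fin N → ℝ) :
    admissibleLabel l m = 0 ∨ ∃ j : Fin N, admissibleLabel l m = j + 1 ∧ 0 < l j ∧ m j ≤ l j := by
  refine Finset.sup_induction
    (p := fun n : ℕ => n = 0 ∨ ∃ j : Fin N, n = j + 1 ∧ 0 < l j ∧ m j ≤ l j) (Or.inl rfl)
    (fun a ha b hb => ?_) fun j _ => ?_
  · rcases le_total a b with h | h
    exacts [(sup_of_le_right h).symm ▸ hb, (sup_of_le_left h).symm ▸ ha]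
  · split_ifs with hj
    exacts [Or.inr ⟨j, rfl, hj⟩, Or.inl rfl]

theorem admissible_of_admissibleLabel_eq_succ {l m : Fin N → ℝ} {i : Fin N}
    (h : admissibleLabel l m = i + 1) : 0 < l i ∧ m i ≤ l i := by
  rcases admissibleLabel_eq_zero_or_exists l m with h0 | ⟨j, hj, hjadm⟩
  · omega
  · obtain rfl : j = i := Fin.ext (by omega)
    exact hjadm

theorem exists_admissibleLabel_eq_succ {l m : Fin N → ℝ} (h : ∃ i, 0 < l i ∧ m i ≤ l i) :
    ∃ i : Fin N, admissibleLabel l m = i + 1 := by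
  obtain ⟨i, hi⟩ := h
  rcases admissibleLabel_eq_zero_or_exists l m with h0 | ⟨j, hj, -⟩
  · have := succ_le_admissibleLabel hi
    omega
  · exact ⟨j, hj⟩

theorem measurable_admissibleLabel {α : Type*} [MeasurableSpace α] {l m : α → Fin N → ℝ}
    (hl : ∀ i, Measurable fun a => l a i) (hm : ∀ i, Measurable fun a => m a i) :
    Measurable fun a => admissibleLabel (l a) (m a) := by
  have : (fun a => admissibleLabel (l a) (m a)) =
      Finset.univ.sup fun i a => if 0 < l a i ∧ m a i ≤ l a i then (i : ℕ) + 1 else 0 := by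
    funext a
    simp only [admissibleLabel, Finset.sup_apply]
  rw [this]
  refine Finset.sup_induction measurable_const (fun _ hf _ hg => hf.sup hg) fun i _ => ?_
  exact Measurable.ite ((measurableSet_lt measurable_const (hl i)).inter
    (measurableSet_le (hm i) (hl i))) measurable_const measurable_const

end AdmissibleLabel

namespace L0

variable {Ω : Type*} [MeasurableSpace Ω] {P : Measure Ω}

theorem coeFn_ind {A : Set Ω} (hA : MeasurableSet A) :
    ⇑(ind P A) =ᵐ[P] A.indicator 1 := by
  rw [ind, dif_pos hA]
  exact AEEqFun.coeFn_mk _ _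

theorem ind_mul_eq_ind_mul_iff {A : Set Ω} (hA : MeasurableSet A) {u v : L0 P} :
    ind P A * u = ind P A * v ↔ ∀ᵐ ω ∂P, ω ∈ A → u ω = v ω := by
  have coeFn_ind_mul : ∀ w : L0 P, ⇑(ind P A * w) =ᵐ[P] A.indicator w := fun w => by
    filter_upwards [AEEqFun.coeFn_mul (ind P A) w, coeFn_ind hA] with ω hmul hind
    by_cases hω : ω ∈ A <;> simp [hmul, hind, hω]
  rw [AEEqFun.ext_iff]
  constructor
  · intro h
    filter_upwards [(coeFn_ind_mul u).symm.trans (h.trans (coeFn_ind_mul v))] with ω h hω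
    simpa [hω] using h
  · intro h
    refine (coeFn_ind_mul u).trans (EventuallyEq.trans ?_ (coeFn_ind_mul v).symm)
    filter_upwards [h] with ω h
    by_cases hω : ω ∈ A <;> simp [hω, h]

theorem ae_nonneg_and_sum_eq_one {ι : Type*} [Fintype ι] {lam : ι → L0 P}
    (h : (∀ i, 0 ≤ lam i) ∧ ∑ i, lam i = 1) :
    ∀ᵐ ω ∂P, (∀ i, 0 ≤ lam i ω) ∧ ∑ i, lam i ω = 1 := by
  have hnonneg : ∀ i, ∀ᵐ ω ∂P, 0 ≤ lam i ω := fun i => by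
    filter_upwards [AEEqFun.coeFn_le.2 (h.1 i), AEEqFun.coeFn_zero (μ := P) (β := ℝ)]
      with ω hle hzero
    simpa [hzero] using hle
  filter_upwards [ae_all_iff.2 hnonneg, AEEqFun.coeFn_fun_finsetSum Finset.univ lam,
    AEEqFun.coeFn_one (μ := P) (β := ℝ)] with ω hnonneg hsum hone
  exact ⟨hnonneg, by rw [← hsum, h.2, hone, Pi.one_apply]⟩

variable {d N : ℕ} {X : Fin N → Fin d → L0 P}

theorem AffInd.eq_zero (hX : AffInd P X) {δ : Fin N → L0 P} (hsum : ∑ i, δ i = 0)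
    (hcomb : ∑ i, δ i • X i = 0) : δ = 0 := by
  match N, X, hX with
  | 1, _, _ =>
    simpa [funext_iff, Fin.forall_fin_one] using hsum
  | m + 2, X, hX =>
    rw [Fin.sum_univ_castSucc] at hsum hcomb
    have hcast := hX (fun i => δ i.castSucc) (by
      simp only [smul_sub, Finset.sum_sub_distrib, ← Finset.sum_smul]
      linear_combination (norm := module) hcomb - hsum • X (Fin.last (m + 1)))
    have hlast : δ (Fin.last (m + 1)) = 0 := by simpa [hcast] using hsum
    funext i
    induction i using Fin.lastCases with
    | last => exact hlast
    | cast i => exact hcast i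

theorem AffInd.mul_coeff_eq (hX : AffInd P X) (e : L0 P) {lam lam' : Fin N → L0 P}
    (hsum : ∑ i, lam i = ∑ i, lam' i) (hcomb : e • ∑ i, lam i • X i = e • ∑ i, lam' i • X i) :
    ∀ i, e * lam i = e * lam' i := by
  have h := hX.eq_zero (δ := fun i => e * (lam i - lam' i))
    (by rw [← Finset.mul_sum, Finset.sum_sub_distrib, hsum, sub_self, mul_zero])
    (by
      simp only [mul_smul, ← Finset.smul_sum, sub_smul, Finset.sum_sub_distrib]
      rw [smul_sub, hcomb, sub_self])
  intro i
  simpa [mul_sub, sub_eq_zero] using congrFun h i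

open Classical in
-- Junk value `0` off `conv P X`.
noncomputable def baryCoord (X : Fin N → Fin d → L0 P) (Z : Fin d → L0 P) : Fin N → L0 P :=
  if hZ : Z ∈ conv P X then hZ.choose else 0

theorem baryCoord_spec {Z : Fin d → L0 P} (hZ : Z ∈ conv P X) :
    (∀ i, 0 ≤ baryCoord X Z i) ∧ ∑ i, baryCoord X Z i = 1 ∧ Z = ∑ i, baryCoord X Z i • X i := by
  rw [baryCoord, dif_pos hZ]
  exact hZ.choose_spec

theorem AffInd.baryCoord_eq (hX : AffInd P X) {Z : Fin d → L0 P} {lam : Fin N → L0 P}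
    (hlam : (∀ i, 0 ≤ lam i) ∧ ∑ i, lam i = 1 ∧ Z = ∑ i, lam i • X i) :
    baryCoord X Z = lam := by
  obtain ⟨-, hsum, hcomb⟩ := baryCoord_spec (X := X) ⟨lam, hlam⟩
  funext i
  simpa using hX.mul_coeff_eq 1 (hsum.trans hlam.2.1.symm)
    (by rw [← hcomb, ← hlam.2.2]) i

theorem AffInd.mul_baryCoord_eq (hX : AffInd P X) (e : L0 P) {Z Y : Fin d → L0 P}
    (hZ : Z ∈ conv P X) (hY : Y ∈ conv P X) (h : e • Z = e • Y) (i : Fin N) :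
    e * baryCoord X Z i = e * baryCoord X Y i := by
  obtain ⟨-, hsumZ, hcombZ⟩ := baryCoord_spec hZ
  obtain ⟨-, hsumY, hcombY⟩ := baryCoord_spec hY
  exact hX.mul_coeff_eq e (hsumZ.trans hsumY.symm) (by rw [← hcombZ, ← hcombY, h]) i

noncomputable def labeling (X : Fin N → Fin d → L0 P) (f : (Fin d → L0 P) → Fin d → L0 P)
    (Z : Fin d → L0 P) : L0 P :=
  AEEqFun.mk (fun ω => (admissibleLabel (baryCoord X Z · ω) (baryCoord X (f Z) · ω) : ℝ))
    (measurable_from_nat.comp (measurable_admissibleLabel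
      (fun i => (baryCoord X Z i).stronglyMeasurable.measurable)
      fun i => (baryCoord X (f Z) i).stronglyMeasurable.measurable)).aestronglyMeasurable

theorem coeFn_labeling (X : Fin N → Fin d → L0 P) (f : (Fin d → L0 P) → Fin d → L0 P)
    (Z : Fin d → L0 P) :
    ⇑(labeling X f Z) =ᵐ[P]
      fun ω => (admissibleLabel (baryCoord X Z · ω) (baryCoord X (f Z) · ω) : ℝ) :=
  AEEqFun.coeFn_mk _ _

theorem AffInd.coeFn_labeling (hX : AffInd P X) {f : (Fin d → L0 P) → Fin d → L0 P}
    {Z : Fin d → L0 P} {lam mu : Fin N → L0 P}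
    (hlam : (∀ i, 0 ≤ lam i) ∧ ∑ i, lam i = 1 ∧ Z = ∑ i, lam i • X i)
    (hmu : (∀ i, 0 ≤ mu i) ∧ ∑ i, mu i = 1 ∧ f Z = ∑ i, mu i • X i) :
    ⇑(labeling X f Z) =ᵐ[P] fun ω => (admissibleLabel (lam · ω) (mu · ω) : ℝ) := by
  simpa only [hX.baryCoord_eq hlam, hX.baryCoord_eq hmu] using L0.coeFn_labeling X f Z

theorem AffInd.isLocalScalar_labeling (hX : AffInd P X) {D : Set (Fin d → L0 P)}
    {f : (Fin d → L0 P) → Fin d → L0 P} (hD : D ⊆ conv P X)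
    (hfS : ∀ Z ∈ conv P X, f Z ∈ conv P X) (hfloc : IsLocal P (conv P X) f) :
    IsLocalScalar P D (labeling X f) := by
  intro A Y Z hA hY hZ hglue j
  have hZj : ind P (A j) • Z = ind P (A j) • Y j := funext fun k => hglue k j
  have hfZj : ind P (A j) • f Z = ind P (A j) • f (Y j) :=
    funext fun k => hfloc A Y Z hA (fun i => hD (hY i)) (hD hZ) hglue k j
  have hlam := fun i => (ind_mul_eq_ind_mul_iff (hA.meas j)).1
    (hX.mul_baryCoord_eq _ (hD hZ) (hD (hY j)) hZj i)
  have hmu := fun i => (ind_mul_eq_ind_mul_iff (hA.meas j)).1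
    (hX.mul_baryCoord_eq _ (hfS _ (hD hZ)) (hfS _ (hD (hY j))) hfZj i)
  show ind P (A j) * labeling X f Z = ind P (A j) * labeling X f (Y j)
  rw [ind_mul_eq_ind_mul_iff (hA.meas j)]
  filter_upwards [L0.coeFn_labeling X f Z, L0.coeFn_labeling X f (Y j), ae_all_iff.2 hlam,
    ae_all_iff.2 hmu] with ω hZω hYω hlamω hmuω hω
  simp only [hZω, hYω, fun i => hlamω i hω, fun i => hmuω i hω]

end L0

open MeasureTheory in
theorem stmt_12_general {Ω : Type*} [MeasurableSpace Ω] (P : Measure Ω)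
    {d N : ℕ} (X : Fin N → Fin d → L0 P) (hX : L0.AffInd P X)
    (D : Set (Fin d → L0 P)) (hDsub : D ⊆ L0.conv P X)
    (f : (Fin d → L0 P) → (Fin d → L0 P))
    (hfS : ∀ Z ∈ L0.conv P X, f Z ∈ L0.conv P X)
    (hfloc : L0.IsLocal P (L0.conv P X) f) :
    (∀ φ : (Fin d → L0 P) → L0 P,
      L0.IsLocalScalar P D φ →
      (∀ Z ∈ D, ∀ᵐ ω ∂P, ∃ n : ℕ, n ≤ N ∧ φ Z ω = n) →
      (∀ Z ∈ D, ∀ lam mu : Fin N → L0 P,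
        ((∀ i, 0 ≤ lam i) ∧ (∑ i, lam i) = 1 ∧ Z = ∑ i, lam i • X i) →
        ((∀ i, 0 ≤ mu i) ∧ (∑ i, mu i) = 1 ∧ f Z = ∑ i, mu i • X i) →
        (∀ i : Fin N, ∀ᵐ ω ∂P, φ Z ω = (i : ℕ) + 1 → 0 < lam i ω ∧ mu i ω ≤ lam i ω) ∧
        (∀ᵐ ω ∂P, (∃ i : Fin N, 0 < lam i ω ∧ mu i ω ≤ lam i ω) →
          ∃ i : Fin N, φ Z ω = (i : ℕ) + 1)) →
      ((∀ Z ∈ D, ∀ᵐ ω ∂P, ∃ i : Fin N, φ Z ω = (i : ℕ) + 1) ∧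
        (∀ Z ∈ D, ∀ lam : Fin N → L0 P,
          ((∀ i, 0 ≤ lam i) ∧ (∑ i, lam i) = 1 ∧ Z = ∑ i, lam i • X i) →
          ∀ i : Fin N, ∀ᵐ ω ∂P, φ Z ω = (i : ℕ) + 1 → 0 < lam i ω)))
    ∧ (∃ φ : (Fin d → L0 P) → L0 P,
        L0.IsLocalScalar P D φ ∧
        (∀ Z ∈ D, ∀ᵐ ω ∂P, ∃ n : ℕ, n ≤ N ∧ φ Z ω = n) ∧
        (∀ Z ∈ D, ∀ lam mu : Fin N → L0 P,
          ((∀ i, 0 ≤ lam i) ∧ (∑ i, lam i) = 1 ∧ Z = ∑ i, lam i • X i) →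
          ((∀ i, 0 ≤ mu i) ∧ (∑ i, mu i) = 1 ∧ f Z = ∑ i, mu i • X i) →
          (∀ i : Fin N, ∀ᵐ ω ∂P, φ Z ω = (i : ℕ) + 1 → 0 < lam i ω ∧ mu i ω ≤ lam i ω) ∧
          (∀ᵐ ω ∂P, (∃ i : Fin N, 0 < lam i ω ∧ mu i ω ≤ lam i ω) →
            ∃ i : Fin N, φ Z ω = (i : ℕ) + 1))) := by
  refine ⟨fun φ _ _ hφ => ⟨fun Z hZ => ?_, fun Z hZ lam hlam i => ?_⟩,
    L0.labeling X f, hX.isLocalScalar_labeling hDsub hfS hfloc, fun Z _ => ?_,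
    fun Z _ lam mu hlam hmu => ⟨fun i => ?_, ?_⟩⟩
  · obtain ⟨lam, hlam⟩ := hDsub hZ
    obtain ⟨mu, hmu⟩ := hfS Z ⟨lam, hlam⟩
    filter_upwards [(hφ Z hZ lam mu hlam hmu).2, L0.ae_nonneg_and_sum_eq_one ⟨hlam.1, hlam.2.1⟩,
      L0.ae_nonneg_and_sum_eq_one ⟨hmu.1, hmu.2.1⟩] with ω hφω hlamω hmuω
    exact hφω (exists_pos_and_le_of_sum_le hmuω.1 (by rw [hlamω.2, hmuω.2])
      (by rw [hlamω.2]; exact one_pos))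
  · obtain ⟨mu, hmu⟩ := hfS Z ⟨lam, hlam⟩
    filter_upwards [(hφ Z hZ lam mu hlam hmu).1 i] with ω hφω hi using (hφω hi).1
  · filter_upwards [L0.coeFn_labeling X f Z] with ω hω
    exact ⟨_, admissibleLabel_le _ _, hω⟩
  · filter_upwards [hX.coeFn_labeling hlam hmu] with ω hω hi
    exact admissible_of_admissibleLabel_eq_succ (by rw [hω] at hi; exact_mod_cast hi)
  · filter_upwards [hX.coeFn_labeling hlam hmu] with ω hω hex
    obtain ⟨i, hi⟩ := exists_admissibleLabel_eq_succ hex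
    exact ⟨i, by rw [hω, hi]; exact_mod_cast rfl⟩

open MeasureTheory in
/-- every local function `φ` on a σ-stable `D ⊆ S` with values in
`{0,…,N}(𝒜)` satisfying (i) and (ii) is a proper labeling function (it takes values in
`{1,…,N}(𝒜)` and `P({φ(X)=i} ⊆ {λᵢ>0}) = 1`), and such a `φ` exists. -/
theorem stmt_12 {Ω : Type*} [MeasurableSpace Ω] (P : Measure Ω) [IsProbabilityMeasure P]
    {d N : ℕ} (X : Fin N → Fin d → L0 P) (hX : L0.AffInd P X)
    (D : Set (Fin d → L0 P)) (hDsub : D ⊆ L0.conv P X) (hDsig : L0.sigmaHull P D = D)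
    (f : (Fin d → L0 P) → (Fin d → L0 P))
    (hfS : ∀ Z ∈ L0.conv P X, f Z ∈ L0.conv P X)
    (hfloc : L0.IsLocal P (L0.conv P X) f) :
    (∀ φ : (Fin d → L0 P) → L0 P,
      L0.IsLocalScalar P D φ →
      (∀ Z ∈ D, ∀ᵐ ω ∂P, ∃ n : ℕ, n ≤ N ∧ φ Z ω = n) →
      (∀ Z ∈ D, ∀ lam mu : Fin N → L0 P,
        ((∀ i, 0 ≤ lam i) ∧ (∑ i, lam i) = 1 ∧ Z = ∑ i, lam i • X i) →
        ((∀ i, 0 ≤ mu i) ∧ (∑ i, mu i) = 1 ∧ f Z = ∑ i, mu i • X i) →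
        (∀ i : Fin N, ∀ᵐ ω ∂P, φ Z ω = (i : ℕ) + 1 → 0 < lam i ω ∧ mu i ω ≤ lam i ω) ∧
        (∀ᵐ ω ∂P, (∃ i : Fin N, 0 < lam i ω ∧ mu i ω ≤ lam i ω) →
          ∃ i : Fin N, φ Z ω = (i : ℕ) + 1)) →
      ((∀ Z ∈ D, ∀ᵐ ω ∂P, ∃ i : Fin N, φ Z ω = (i : ℕ) + 1) ∧
        (∀ Z ∈ D, ∀ lam : Fin N → L0 P,
          ((∀ i, 0 ≤ lam i) ∧ (∑ i, lam i) = 1 ∧ Z = ∑ i, lam i • X i) →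
          ∀ i : Fin N, ∀ᵐ ω ∂P, φ Z ω = (i : ℕ) + 1 → 0 < lam i ω)))
    ∧ (∃ φ : (Fin d → L0 P) → L0 P,
        L0.IsLocalScalar P D φ ∧
        (∀ Z ∈ D, ∀ᵐ ω ∂P, ∃ n : ℕ, n ≤ N ∧ φ Z ω = n) ∧
        (∀ Z ∈ D, ∀ lam mu : Fin N → L0 P,
          ((∀ i, 0 ≤ lam i) ∧ (∑ i, lam i) = 1 ∧ Z = ∑ i, lam i • X i) →
          ((∀ i, 0 ≤ mu i) ∧ (∑ i, mu i) = 1 ∧ f Z = ∑ i, mu i • X i) →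
          (∀ i : Fin N, ∀ᵐ ω ∂P, φ Z ω = (i : ℕ) + 1 → 0 < lam i ω ∧ mu i ω ≤ lam i ω) ∧
          (∀ᵐ ω ∂P, (∃ i : Fin N, 0 < lam i ω ∧ mu i ω ≤ lam i ω) →
            ∃ i : Fin N, φ Z ω = (i : ℕ) + 1))) :=
  stmt_12_general P X hX D hDsub f hfS hfloc
end

section
/- Let K be a nonempty, L⁰-convex, sequentially closed and bounded subset of (L⁰)^d, X ∈ (L⁰)^d and Y ∈ K. Then ‖X − Y‖ ≤ ‖X − Z‖ P-almost surely for every Z ∈ K if and only if ⟨X − Y, Z − Y⟩ ≤ 0 P-almost surely for every Z ∈ K. -/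
open MeasureTheory Filter

/-!
Everything is checked `ω` by `ω` on representatives, where it becomes the Euclidean variational
inequality with `a = X(ω) - Y(ω)` and `b = Z(ω) - Y(ω)`. If `⟪a, b⟫ ≤ 0` then
`‖a - b‖² = ‖a‖² - 2⟪a, b⟫ + ‖b‖² ≥ ‖a‖²`. Conversely, `L⁰`-convexity puts the points
`Y + (Z - Y)/(n + 1)` (constant weights) in `K`, and minimality of `‖X - Y‖` against them gives,
outside a single null set, `2⟪a, b⟫ ≤ ‖b‖²/(n + 1)` for every `n`, hence `⟪a, b⟫ ≤ 0`.
-/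

open scoped InnerProductSpace

section InnerProductSpace

variable {E : Type*} [NormedAddCommGroup E] [InnerProductSpace ℝ E]

theorem real_inner_nonpos_of_forall_norm_le_norm_sub_smul {a b : E}
    (h : ∀ n : ℕ, ‖a‖ ≤ ‖a - (1 / ((n : ℝ) + 1)) • b‖) : ⟪a, b⟫_ℝ ≤ 0 := by
  have hstep : ∀ n : ℕ, 2 * ⟪a, b⟫_ℝ ≤ 1 / ((n : ℝ) + 1) * ‖b‖ ^ 2 := fun n => by
    set t : ℝ := 1 / ((n : ℝ) + 1)
    have ht : 0 < t := by positivity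
    have hsq : ‖a‖ ^ 2 ≤ ‖a - t • b‖ ^ 2 := by gcongr; exact h n
    rw [norm_sub_sq_real, real_inner_smul_right, norm_smul, Real.norm_of_nonneg ht.le] at hsq
    nlinarith
  have hlim : Tendsto (fun n : ℕ => 1 / ((n : ℝ) + 1) * ‖b‖ ^ 2) atTop (nhds 0) := by
    simpa using tendsto_one_div_add_atTop_nhds_zero_nat.mul_const (‖b‖ ^ 2)
  linarith [ge_of_tendsto' hlim hstep]

theorem norm_le_norm_sub_of_real_inner_nonpos {a b : E} (h : ⟪a, b⟫_ℝ ≤ 0) :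
    ‖a‖ ≤ ‖a - b‖ := by
  have hsq : ‖a‖ ^ 2 ≤ ‖a - b‖ ^ 2 := by
    rw [norm_sub_sq_real]
    nlinarith [sq_nonneg ‖b‖]
  exact (pow_le_pow_iff_left₀ (norm_nonneg _) (norm_nonneg _) two_ne_zero).mp hsq

end InnerProductSpace

theorem MeasureTheory.AEEqFun.coeFn_finset_sum {Ω β ι : Type*} [MeasurableSpace Ω]
    {P : Measure Ω} [TopologicalSpace β] [AddCommMonoid β] [ContinuousAdd β]
    (s : Finset ι) (f : ι → Ω →ₘ[P] β) :
    ⇑(∑ i ∈ s, f i) =ᵐ[P] fun ω => ∑ i ∈ s, f i ω := by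
  classical
  induction s using Finset.induction_on with
  | empty => exact AEEqFun.coeFn_zero
  | insert a s has ih =>
    filter_upwards [AEEqFun.coeFn_add (f a) (∑ i ∈ s, f i), ih] with ω hadd hsum
    simp only [Finset.sum_insert has, hadd, Pi.add_apply, hsum]

namespace L0

variable {Ω : Type*} [MeasurableSpace Ω] {P : Measure Ω} {d : ℕ}

noncomputable def vecAt (W : Fin d → L0 P) (ω : Ω) : EuclideanSpace ℝ (Fin d) :=
  WithLp.toLp 2 fun k => W k ω

theorem coeFn_inner (W V : Fin d → L0 P) :
    ⇑(inner P W V) =ᵐ[P] fun ω => ⟪vecAt W ω, vecAt V ω⟫_ℝ := by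
  filter_upwards [AEEqFun.coeFn_finset_sum Finset.univ fun k => W k * V k,
    ae_all_iff.2 fun k => AEEqFun.coeFn_mul (W k) (V k)] with ω hsum hmul
  simp [inner, vecAt, hsum, hmul, PiLp.inner_apply, mul_comm]

theorem coeFn_norm (W : Fin d → L0 P) : ⇑(norm P W) =ᵐ[P] fun ω => ‖vecAt W ω‖ := by
  filter_upwards [AEEqFun.coeFn_comp Real.sqrt Real.continuous_sqrt (inner P W W),
    coeFn_inner W W] with ω hsqrt hinner
  rw [norm, hsqrt, Function.comp_apply, hinner, norm_eq_sqrt_real_inner]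

theorem norm_le_norm_iff (W V : Fin d → L0 P) :
    norm P W ≤ norm P V ↔ ∀ᵐ ω ∂P, ‖vecAt W ω‖ ≤ ‖vecAt V ω‖ := by
  rw [← AEEqFun.coeFn_le]
  refine eventually_congr ?_
  filter_upwards [coeFn_norm W, coeFn_norm V] with ω hW hV
  rw [hW, hV]

theorem inner_nonpos_iff (W V : Fin d → L0 P) :
    inner P W V ≤ 0 ↔ ∀ᵐ ω ∂P, ⟪vecAt W ω, vecAt V ω⟫_ℝ ≤ 0 := by
  rw [← AEEqFun.coeFn_le]
  refine eventually_congr ?_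
  filter_upwards [coeFn_inner W V, AEEqFun.coeFn_zero (β := ℝ) (μ := P)] with ω hWV h0
  rw [hWV, h0, Pi.zero_apply]

theorem vecAt_sub (W V : Fin d → L0 P) :
    ∀ᵐ ω ∂P, vecAt (W - V) ω = vecAt W ω - vecAt V ω := by
  filter_upwards [ae_all_iff.2 fun k => AEEqFun.coeFn_sub (W k) (V k)] with ω h
  ext k
  simp [vecAt, h k]

theorem vecAt_add (W V : Fin d → L0 P) :
    ∀ᵐ ω ∂P, vecAt (W + V) ω = vecAt W ω + vecAt V ω := by
  filter_upwards [ae_all_iff.2 fun k => AEEqFun.coeFn_add (W k) (V k)] with ω h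
  ext k
  simp [vecAt, h k]

theorem vecAt_smul (lam : L0 P) (W : Fin d → L0 P) :
    ∀ᵐ ω ∂P, vecAt (lam • W) ω = lam ω • vecAt W ω := by
  filter_upwards [ae_all_iff.2 fun k => AEEqFun.coeFn_mul lam (W k)] with ω h
  ext k
  simp [vecAt, h k]

theorem const_nonneg {c : ℝ} (hc : 0 ≤ c) : 0 ≤ (AEEqFun.const Ω c : L0 P) :=
  (AEEqFun.mk_le_mk _ _).2 (Eventually.of_forall fun _ => hc)

theorem const_le_one {c : ℝ} (hc : c ≤ 1) : (AEEqFun.const Ω c : L0 P) ≤ 1 :=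
  (AEEqFun.mk_le_mk _ _).2 (Eventually.of_forall fun _ => hc)

theorem vecAt_sub_segment (X Y Z : Fin d → L0 P) (lam : L0 P) :
    ∀ᵐ ω ∂P, vecAt (X - (lam • Z + (1 - lam) • Y)) ω
      = vecAt (X - Y) ω - lam ω • vecAt (Z - Y) ω := by
  filter_upwards [vecAt_sub X (lam • Z + (1 - lam) • Y), vecAt_add (lam • Z) ((1 - lam) • Y),
    vecAt_smul lam Z, vecAt_smul (1 - lam) Y, vecAt_sub X Y, vecAt_sub Z Y,
    AEEqFun.coeFn_sub 1 lam, AEEqFun.coeFn_one (β := ℝ) (μ := P)]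
    with ω h1 h2 h3 h4 h5 h6 h7 h8
  rw [h1, h2, h3, h4, h5, h6, h7, Pi.sub_apply, h8, Pi.one_apply]
  module

end L0

open MeasureTheory in
theorem stmt_15_general {Ω : Type*} [MeasurableSpace Ω] (P : Measure Ω)
    {d : ℕ} (K : Set (Fin d → L0 P))
    (hconv : L0.L0Convex P K)
    (X : Fin d → L0 P) (Y : Fin d → L0 P) (hY : Y ∈ K) :
    (∀ Z ∈ K, L0.norm P (X - Y) ≤ L0.norm P (X - Z)) ↔
      (∀ Z ∈ K, L0.inner P (X - Y) (Z - Y) ≤ 0) := by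
  constructor
  · intro hmin Z hZ
    have hsegment : ∀ n : ℕ, ∀ᵐ ω ∂P, ‖L0.vecAt (X - Y) ω‖
        ≤ ‖L0.vecAt (X - Y) ω - (1 / ((n : ℝ) + 1)) • L0.vecAt (Z - Y) ω‖ := fun n => by
      set c : ℝ := 1 / ((n : ℝ) + 1)
      have hc0 : 0 ≤ c := by positivity
      have hc1 : c ≤ 1 := div_le_one_of_le₀ (by linarith [n.cast_nonneg (α := ℝ)]) (by positivity)
      have hmem := hconv Z hZ Y hY _ (L0.const_nonneg hc0) (L0.const_le_one hc1)
      filter_upwards [(L0.norm_le_norm_iff _ _).1 (hmin _ hmem), L0.vecAt_sub_segment X Y Z _,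
        AEEqFun.coeFn_const Ω c] with ω hω hvec hconst
      rwa [hvec, hconst] at hω
    rw [L0.inner_nonpos_iff]
    filter_upwards [ae_all_iff.2 hsegment] with ω hω
    exact real_inner_nonpos_of_forall_norm_le_norm_sub_smul hω
  · intro hvar Z hZ
    rw [L0.norm_le_norm_iff]
    filter_upwards [(L0.inner_nonpos_iff _ _).1 (hvar Z hZ), L0.vecAt_sub X Z, L0.vecAt_sub X Y,
      L0.vecAt_sub Z Y] with ω hω hXZ hXY hZY
    rw [hXZ, show L0.vecAt X ω - L0.vecAt Z ω = L0.vecAt (X - Y) ω - L0.vecAt (Z - Y) ω by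
      rw [hXY, hZY]; abel]
    exact norm_le_norm_sub_of_real_inner_nonpos hω

open MeasureTheory in
/-- characterization of the projection onto a nonempty, `L⁰`-convex,
sequentially closed and bounded set. -/
theorem stmt_15 {Ω : Type*} [MeasurableSpace Ω] (P : Measure Ω) [IsProbabilityMeasure P]
    {d : ℕ} (K : Set (Fin d → L0 P)) (hne : K.Nonempty)
    (hconv : L0.L0Convex P K) (hclosed : L0.SeqClosed P K) (hbdd : L0.Bounded P K)
    (X : Fin d → L0 P) (Y : Fin d → L0 P) (hY : Y ∈ K) :
    (∀ Z ∈ K, L0.norm P (X - Y) ≤ L0.norm P (X - Z)) ↔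
      (∀ Z ∈ K, L0.inner P (X - Y) (Z - Y) ≤ 0) :=
  stmt_15_general P K hconv X Y hY
end

section
/- Let K be a nonempty, L⁰-convex, sequentially closed and bounded subset of (L⁰)^d. Suppose X₁, X₂ ∈ (L⁰)^d and Y₁, Y₂ ∈ K satisfy ⟨X₁ − Y₁, Z − Y₁⟩ ≤ 0 and ⟨X₂ − Y₂, Z − Y₂⟩ ≤ 0 P-almost surely for every Z ∈ K (i.e., Y₁ and Y₂ are the projections of X₁ and X₂ onto K). Then ‖Y₁ − Y₂‖ ≤ ‖X₁ − X₂‖ P-almost surely. -/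
open MeasureTheory Filter

/-! The variational inequalities for `Y₁` and `Y₂`, tested at `Z = Y₂` and `Z = Y₁`, add up to
`‖Y₁ - Y₂‖² ≤ ⟪X₁ - X₂, Y₁ - Y₂⟫`, and Cauchy–Schwarz gives the claim. The argument is
pointwise: after choosing representatives it runs `ω` by `ω` in the Euclidean space `ℝᵈ`. -/

open scoped InnerProductSpace

section NonexpansiveProjection

variable {E : Type*} [NormedAddCommGroup E] [InnerProductSpace ℝ E]

theorem norm_sub_le_of_inner_sub_nonpos {x₁ x₂ y₁ y₂ : E}
    (h₁ : ⟪x₁ - y₁, y₂ - y₁⟫_ℝ ≤ 0) (h₂ : ⟪x₂ - y₂, y₁ - y₂⟫_ℝ ≤ 0) :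
    ‖y₁ - y₂‖ ≤ ‖x₁ - x₂‖ := by
  have hsum : ⟪x₁ - y₁, y₂ - y₁⟫_ℝ + ⟪x₂ - y₂, y₁ - y₂⟫_ℝ =
      ‖y₁ - y₂‖ ^ 2 - ⟪x₁ - x₂, y₁ - y₂⟫_ℝ := by
    rw [← real_inner_self_eq_norm_sq]
    simp only [inner_sub_left, inner_sub_right, real_inner_comm]
    ring
  have hsq : ‖y₁ - y₂‖ * ‖y₁ - y₂‖ ≤ ‖x₁ - x₂‖ * ‖y₁ - y₂‖ := by
    nlinarith [real_inner_le_norm (x₁ - x₂) (y₁ - y₂)]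
  rcases (norm_nonneg (y₁ - y₂)).eq_or_lt with h | h
  · rw [← h]
    exact norm_nonneg _
  · exact le_of_mul_le_mul_right hsq h

end NonexpansiveProjection

section Pointwise

open MeasureTheory

variable {Ω : Type*} [MeasurableSpace Ω] {P : Measure Ω} {d : ℕ}

/-- The value at `ω` of chosen representatives of the coordinates; it depends on the
representatives, so only almost-sure statements about it are meaningful. -/
noncomputable def L0.vecAt_s16 (X : Fin d → L0 P) (ω : Ω) : EuclideanSpace ℝ (Fin d) :=
  WithLp.toLp 2 fun k => X k ω

theorem L0.vecAt_sub_s16 (X Y : Fin d → L0 P) :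
    ∀ᵐ ω ∂P, vecAt_s16 (X - Y) ω = vecAt_s16 X ω - vecAt_s16 Y ω := by
  filter_upwards [ae_all_iff.2 fun k => AEEqFun.coeFn_sub (X k) (Y k)] with ω h
  ext k
  exact h k

theorem L0.coeFn_inner_s16 (X Y : Fin d → L0 P) :
    ⇑(L0.inner P X Y) =ᵐ[P] fun ω => ⟪vecAt_s16 X ω, vecAt_s16 Y ω⟫_ℝ := by
  filter_upwards [AEEqFun.coeFn_finsetSum Finset.univ fun k => X k * Y k,
    ae_all_iff.2 fun k => AEEqFun.coeFn_mul (X k) (Y k)] with ω hsum hmul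
  simp [L0.inner, hsum, hmul, vecAt_s16, PiLp.inner_apply, mul_comm]

theorem L0.coeFn_norm_s16 (X : Fin d → L0 P) :
    ⇑(L0.norm P X) =ᵐ[P] fun ω => ‖vecAt_s16 X ω‖ := by
  filter_upwards [AEEqFun.coeFn_comp Real.sqrt Real.continuous_sqrt (L0.inner P X X),
    coeFn_inner_s16 X X] with ω hsqrt hinner
  rw [L0.norm, hsqrt, Function.comp_apply, hinner, norm_eq_sqrt_real_inner]

theorem L0.ae_inner_nonpos {X Y : Fin d → L0 P} (h : L0.inner P X Y ≤ 0) :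
    ∀ᵐ ω ∂P, ⟪vecAt_s16 X ω, vecAt_s16 Y ω⟫_ℝ ≤ 0 := by
  filter_upwards [AEEqFun.coeFn_le.2 h, coeFn_inner_s16 X Y,
    AEEqFun.coeFn_zero (μ := P) (β := ℝ)] with ω hle hinner hzero
  rwa [hinner, hzero] at hle

theorem L0.norm_le_of_ae_norm_le {X Y : Fin d → L0 P}
    (h : ∀ᵐ ω ∂P, ‖vecAt_s16 X ω‖ ≤ ‖vecAt_s16 Y ω‖) : L0.norm P X ≤ L0.norm P Y := by
  rw [← AEEqFun.coeFn_le]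
  filter_upwards [h, coeFn_norm_s16 X, coeFn_norm_s16 Y] with ω hle hX hY
  rwa [hX, hY]

end Pointwise

open MeasureTheory in
theorem stmt_16_general {Ω : Type*} [MeasurableSpace Ω] (P : Measure Ω)
    {d : ℕ} (K : Set (Fin d → L0 P))
    (X₁ X₂ : Fin d → L0 P) (Y₁ Y₂ : Fin d → L0 P) (hY₁ : Y₁ ∈ K) (hY₂ : Y₂ ∈ K)
    (h₁ : ∀ Z ∈ K, L0.inner P (X₁ - Y₁) (Z - Y₁) ≤ 0)
    (h₂ : ∀ Z ∈ K, L0.inner P (X₂ - Y₂) (Z - Y₂) ≤ 0) :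
    L0.norm P (Y₁ - Y₂) ≤ L0.norm P (X₁ - X₂) := by
  apply L0.norm_le_of_ae_norm_le
  filter_upwards [L0.ae_inner_nonpos (h₁ Y₂ hY₂), L0.ae_inner_nonpos (h₂ Y₁ hY₁),
    L0.vecAt_sub_s16 X₁ Y₁, L0.vecAt_sub_s16 Y₂ Y₁, L0.vecAt_sub_s16 X₂ Y₂, L0.vecAt_sub_s16 Y₁ Y₂,
    L0.vecAt_sub_s16 X₁ X₂] with ω h₁ h₂ e₁ e₂ e₃ e₄ e₅
  rw [e₁, e₂] at h₁
  rw [e₃, e₄] at h₂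
  rw [e₄, e₅]
  exact norm_sub_le_of_inner_sub_nonpos h₁ h₂

open MeasureTheory in
/-- the projection onto a nonempty, `L⁰`-convex, sequentially closed and
bounded set is nonexpansive. -/
theorem stmt_16 {Ω : Type*} [MeasurableSpace Ω] (P : Measure Ω) [IsProbabilityMeasure P]
    {d : ℕ} (K : Set (Fin d → L0 P)) (hne : K.Nonempty)
    (hconv : L0.L0Convex P K) (hclosed : L0.SeqClosed P K) (hbdd : L0.Bounded P K)
    (X₁ X₂ : Fin d → L0 P) (Y₁ Y₂ : Fin d → L0 P) (hY₁ : Y₁ ∈ K) (hY₂ : Y₂ ∈ K)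
    (h₁ : ∀ Z ∈ K, L0.inner P (X₁ - Y₁) (Z - Y₁) ≤ 0)
    (h₂ : ∀ Z ∈ K, L0.inner P (X₂ - Y₂) (Z - Y₂) ≤ 0) :
    L0.norm P (Y₁ - Y₂) ≤ L0.norm P (X₁ - X₂) :=
  stmt_16_general P K X₁ X₂ Y₁ Y₂ hY₁ hY₂ h₁ h₂
end
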